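/- Let A be a unital B_0-algebra with an orthogonal basis (e_n). If there exists x = Σ t_n e_n ∈ A with t_n real, t_n ≤ t_{n+1} for all n, and t_n → ∞, then every multiplicative linear functional on A is continuous. -/

import Mathlib

/-!
Multiplication is jointly continuous, so `y * eₙ = coef y n • eₙ` and `Σ eₙ = 1`. A nonzero
character `φ` with `φ eₙ ≠ 0` is `y ↦ coef y n`, continuous because `c ↦ c • eₙ` is a closed
embedding `ℂ → A`. If instead `φ` kills every `eₙ`, let `l = φ x`; changing finitely many
coefficients of `x - l` gives `z = Σ (uₙ - l) eₙ` with `‖l‖ < uₙ ↗ ∞` and still `φ z = 0`. The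
coefficients `(uₙ - l)⁻¹` tend to `0` with summable variation, so Abel summation against the
convergent partial sums of `Σ eₙ` makes `Σ (uₙ - l)⁻¹ eₙ` converge, to a right inverse of `z`:
then `1 = φ 1 = φ z * φ w = 0`.
-/

open Filter Topology

/-- `x = Σ_{n} a n • e n` as convergence of ordered partial sums. -/
def HasExpansion {A : Type*} [AddCommMonoid A] [Module ℂ A] [TopologicalSpace A]
    (a : ℕ → ℂ) (e : ℕ → A) (x : A) : Prop :=
  Tendsto (fun N => ∑ n ∈ Finset.range N, a n • e n) atTop (𝓝 x)

open Finset

section SeminormFamily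

variable {𝕜 E ι κ : Type*} [NormedField 𝕜]

theorem WithSeminorms.summable_of_summable_seminorm [AddCommGroup E] [Module 𝕜 E]
    [UniformSpace E] [IsUniformAddGroup E] [CompleteSpace E] {p : SeminormFamily 𝕜 E κ}
    (hp : WithSeminorms p) {f : ι → E} (hf : ∀ k, Summable fun n => p k (f n)) : Summable f := by
  refine summable_iff_vanishing.2 fun U hU => ?_
  obtain ⟨⟨s, r⟩, hr, hball⟩ := hp.hasBasis_zero_ball.mem_iff.1 hU
  have hsum : Summable fun n => s.sup p (f n) :=
    (summable_sum fun k _ => hf k).of_nonneg_of_le (fun n => apply_nonneg _ _) fun n =>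
      Seminorm.finset_sup_apply_le (sum_nonneg fun _ _ => apply_nonneg _ _) fun _ hk =>
        single_le_sum (f := fun k => p k (f n)) (fun _ _ => apply_nonneg _ _) hk
  obtain ⟨s', hs'⟩ := summable_iff_vanishing_norm.1 hsum r hr
  refine ⟨s', fun t ht => hball ?_⟩
  rw [Seminorm.mem_ball_zero]
  calc s.sup p (∑ n ∈ t, f n) ≤ ∑ n ∈ t, s.sup p (f n) :=
        le_sum_of_subadditive _ (map_zero _).le (map_add_le_add _) _ _
    _ ≤ ‖∑ n ∈ t, s.sup p (f n)‖ := Real.le_norm_self _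
    _ < r := hs' t ht

theorem WithSeminorms.continuousMul [NonUnitalRing E] [Module 𝕜 E] [TopologicalSpace E]
    {p : SeminormFamily 𝕜 E κ} (hp : WithSeminorms p)
    (hmul : ∀ i, ∃ j, ∀ x y, p i (x * y) ≤ p j x * p j y) : ContinuousMul E := by
  refine ⟨continuous_iff_continuousAt.2 fun ⟨a, b⟩ => (hp.tendsto_nhds _ _).2 fun i ε hε => ?_⟩
  obtain ⟨j, hj⟩ := hmul i
  have := hp.topologicalAddGroup
  have hpj : Continuous (p j) := hp.continuous_seminorm j
  have hbound : Tendsto (fun q : E × E => p j (q.1 - a) * p j q.2 + p j a * p j (q.2 - b))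
      (𝓝 (a, b)) (𝓝 0) := by
    simpa using (show Continuous fun q : E × E =>
      p j (q.1 - a) * p j q.2 + p j a * p j (q.2 - b) by fun_prop).tendsto (a, b)
  filter_upwards [hbound.eventually (gt_mem_nhds hε)] with q hq
  calc p i (q.1 * q.2 - a * b) = p i ((q.1 - a) * q.2 + a * (q.2 - b)) := by
        rw [sub_mul, mul_sub, sub_add_sub_cancel]
    _ ≤ p j (q.1 - a) * p j q.2 + p j a * p j (q.2 - b) :=
        (map_add_le_add _ _ _).trans (add_le_add (hj _ _) (hj _ _))
    _ < ε := hq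

end SeminormFamily

theorem sub_norm_le_norm_ofReal_sub (r : ℝ) (l : ℂ) : r - ‖l‖ ≤ ‖(r : ℂ) - l‖ :=
  calc r - ‖l‖ ≤ ‖(r : ℂ)‖ - ‖l‖ := by rw [Complex.norm_real]; gcongr; exact Real.le_norm_self r
    _ ≤ ‖(r : ℂ) - l‖ := norm_sub_norm_le _ _

theorem Monotone.summable_norm_inv_ofReal_sub_succ_sub_inv {u : ℕ → ℝ} (hu : Monotone u) {l : ℂ}
    (hl : ∀ n, ‖l‖ < u n) :
    Summable fun n => ‖((u (n + 1) : ℂ) - l)⁻¹ - ((u n : ℂ) - l)⁻¹‖ := by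
  set w : ℕ → ℝ := fun n => u n - ‖l‖
  have hw : ∀ n, 0 < w n := fun n => sub_pos.2 (hl n)
  have hle : ∀ n, w n ≤ ‖(u n : ℂ) - l‖ := fun n => sub_norm_le_norm_ofReal_sub (u n) l
  have hne : ∀ n, (u n : ℂ) - l ≠ 0 := fun n => norm_pos_iff.1 ((hw n).trans_le (hle n))
  have hstep : ∀ n, ‖((u (n + 1) : ℂ) - l)⁻¹ - ((u n : ℂ) - l)⁻¹‖ ≤ (w n)⁻¹ - (w (n + 1))⁻¹ := by
    intro n
    have hdiff : ‖((u n : ℂ) - l) - ((u (n + 1) : ℂ) - l)‖ = w (n + 1) - w n := by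
      rw [sub_sub_sub_cancel_right, ← Complex.ofReal_sub, Complex.norm_real, Real.norm_eq_abs,
        abs_of_nonpos (sub_nonpos.2 (hu n.le_succ))]
      simp only [w]; ring
    calc ‖((u (n + 1) : ℂ) - l)⁻¹ - ((u n : ℂ) - l)⁻¹‖
        = (w (n + 1) - w n) / (‖(u (n + 1) : ℂ) - l‖ * ‖(u n : ℂ) - l‖) := by
          rw [inv_sub_inv (hne _) (hne _), norm_div, norm_mul, hdiff]
      _ ≤ (w (n + 1) - w n) / (w (n + 1) * w n) := by
          have : 0 ≤ w (n + 1) - w n := sub_nonneg.2 (by simpa [w] using hu n.le_succ)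
          exact div_le_div_of_nonneg_left this (mul_pos (hw _) (hw _))
            (mul_le_mul (hle _) (hle _) (hw _).le (norm_nonneg _))
      _ = (w n)⁻¹ - (w (n + 1))⁻¹ := by
          rw [inv_sub_inv (hw _).ne' (hw _).ne', mul_comm]
  refine Summable.of_nonneg_of_le (fun n => norm_nonneg _) hstep <|
    summable_of_sum_range_le (c := (w 0)⁻¹) (fun n => (norm_nonneg _).trans (hstep n)) fun N => ?_
  rw [sum_range_sub']
  exact sub_le_self _ (inv_nonneg.2 (hw N).le)

section HasExpansion

variable {A : Type*} {a b : ℕ → ℂ} {e : ℕ → A} {x y : A}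

section Module

variable [AddCommGroup A] [Module ℂ A] [TopologicalSpace A]

theorem hasExpansion_of_forall_ge_eq_zero (e : ℕ → A) {N : ℕ} (ha : ∀ n ≥ N, a n = 0) :
    HasExpansion a e (∑ n ∈ range N, a n • e n) :=
  tendsto_const_nhds.congr' <| (eventually_ge_atTop N).mono fun _ hM =>
    (eventually_constant_sum (fun n hn => by rw [ha n hn, zero_smul]) hM).symm

theorem hasExpansion_single (e : ℕ → A) (n : ℕ) (c : ℂ) :
    HasExpansion (Pi.single n c) e (c • e n) := by
  simpa [Pi.single_apply, ite_smul] using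
    hasExpansion_of_forall_ge_eq_zero (a := Pi.single n c) e (N := n + 1)
      fun m hm => by simp [(Nat.lt_of_succ_le hm).ne']

theorem basis_ne_zero {coef : A → ℕ → ℂ} (huniq : ∀ x a, HasExpansion a e x → a = coef x)
    (n : ℕ) : e n ≠ 0 := by
  intro hn
  have h1 := huniq 0 _ (by simpa only [hn, smul_zero] using hasExpansion_single e n 1)
  have h0 := huniq 0 _ (by simpa only [hn, smul_zero] using hasExpansion_single e n 0)
  simpa using congrFun (h1.trans h0.symm) n

theorem HasExpansion.unique [T2Space A] (hx : HasExpansion a e x) (hy : HasExpansion a e y) :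
    x = y :=
  tendsto_nhds_unique hx hy

theorem HasExpansion.const_smul [ContinuousConstSMul ℂ A] (hx : HasExpansion a e x) (c : ℂ) :
    HasExpansion (c • a) e (c • x) := by
  simpa only [HasExpansion, Pi.smul_apply, smul_eq_mul, mul_smul, ← smul_sum] using
    Tendsto.const_smul hx c

variable [IsTopologicalAddGroup A]

theorem HasExpansion.add (hx : HasExpansion a e x) (hy : HasExpansion b e y) :
    HasExpansion (a + b) e (x + y) := by
  simpa only [HasExpansion, Pi.add_apply, add_smul, sum_add_distrib] using Tendsto.add hx hy

theorem HasExpansion.sub (hx : HasExpansion a e x) (hy : HasExpansion b e y) :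
    HasExpansion (a - b) e (x - y) := by
  simpa only [HasExpansion, Pi.sub_apply, sub_smul, sum_sub_distrib] using Tendsto.sub hx hy

end Module

section Algebra

variable [Ring A] [Algebra ℂ A]

theorem sum_smul_mul_sum_smul_of_orthogonal (horth : ∀ i j, e i * e j = if i = j then e i else 0)
    (a b : ℕ → ℂ) (s : Finset ℕ) :
    (∑ n ∈ s, a n • e n) * (∑ n ∈ s, b n • e n) = ∑ n ∈ s, (a n * b n) • e n := by
  simp only [sum_mul_sum, smul_mul_smul_comm, horth, smul_ite, smul_zero, sum_ite_eq]
  exact sum_congr rfl fun n hn => if_pos hn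

variable [TopologicalSpace A] [ContinuousMul A]

theorem HasExpansion.mul (horth : ∀ i j, e i * e j = if i = j then e i else 0)
    (hx : HasExpansion a e x) (hy : HasExpansion b e y) :
    HasExpansion (a * b) e (x * y) :=
  (Tendsto.mul hx hy).congr fun _ => sum_smul_mul_sum_smul_of_orthogonal horth a b _

theorem HasExpansion.mul_basis [T2Space A]
    (horth : ∀ i j, e i * e j = if i = j then e i else 0) (hx : HasExpansion a e x) (n : ℕ) :
    x * e n = a n • e n := by
  have hprod := hx.mul horth (hasExpansion_single e n 1)
  rw [one_smul, ← Pi.single_mul_right, mul_one] at hprod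
  exact hprod.unique (hasExpansion_single e n (a n))

theorem hasExpansion_one [T2Space A] (horth : ∀ i j, e i * e j = if i = j then e i else 0)
    (ha : HasExpansion a e 1) (he : ∀ n, e n ≠ 0) : HasExpansion 1 e 1 := by
  convert ha using 1
  funext n
  exact smul_left_injective ℂ (he n) (by simpa using ha.mul_basis horth n)

end Algebra

end HasExpansion

theorem AlgHom.continuous_of_forall_mul_eq_smul {A : Type*} [Ring A] [Algebra ℂ A]
    [TopologicalSpace A] [IsTopologicalAddGroup A] [ContinuousSMul ℂ A] [T2Space A]
    [ContinuousMul A] (φ : A →ₐ[ℂ] ℂ) {v : A} (hφ : φ v ≠ 0)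
    (hv : ∀ y, ∃ c : ℂ, y * v = c • v) : Continuous φ := by
  have hv0 : v ≠ 0 := fun h => hφ (by rw [h, map_zero])
  have hφv : ∀ y, φ y • v = y * v := by
    intro y
    obtain ⟨c, hc⟩ := hv y
    have : φ y * φ v = c * φ v := by rw [← map_mul, hc, map_smul, smul_eq_mul]
    rw [mul_right_cancel₀ hφ this, hc]
  rw [(isClosedEmbedding_smul_left hv0).continuous_iff]
  simpa only [Function.comp_def, hφv] using continuous_mul_const v

theorem exists_hasExpansion_of_tendsto_zero_of_summable_norm_sub {A κ : Type*}
    [AddCommGroup A] [Module ℂ A] [UniformSpace A] [IsUniformAddGroup A] [ContinuousSMul ℂ A]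
    [CompleteSpace A]
    {p : SeminormFamily ℂ A κ} (hp : WithSeminorms p) {e : ℕ → A} {g : A}
    (hg : HasExpansion 1 e g) {c : ℕ → ℂ} (hc0 : Tendsto c atTop (𝓝 0))
    (hc : Summable fun n => ‖c (n + 1) - c n‖) : ∃ w, HasExpansion c e w := by
  set G : ℕ → A := fun M => ∑ n ∈ range M, e n
  have hG : Tendsto G atTop (𝓝 g) := by simpa only [HasExpansion, Pi.one_apply, one_smul] using hg
  have hsum : Summable fun n => (c (n + 1) - c n) • G (n + 1) := by
    refine hp.summable_of_summable_seminorm fun k => ?_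
    obtain ⟨B, hB⟩ := (((hp.continuous_seminorm k).tendsto g).comp hG).bddAbove_range
    refine (hc.mul_right B).of_nonneg_of_le (fun n => apply_nonneg _ _) fun n => ?_
    rw [map_smul_eq_mul]
    exact mul_le_mul_of_nonneg_left (hB ⟨n + 1, rfl⟩) (norm_nonneg _)
  refine ⟨-∑' n, (c (n + 1) - c n) • G (n + 1), (tendsto_add_atTop_iff_nat 1).1 ?_⟩
  have hlim := (hc0.smul (hG.comp (tendsto_add_atTop_nat 1))).sub hsum.hasSum.tendsto_sum_nat
  rw [zero_smul, zero_sub] at hlim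
  exact hlim.congr fun M => (sum_range_by_parts c e (M + 1)).symm

section Inverse

variable {A κ : Type*} [Ring A] [Algebra ℂ A] [UniformSpace A] [IsUniformAddGroup A]
  [ContinuousSMul ℂ A] [CompleteSpace A] [T2Space A] [ContinuousMul A]
  {p : SeminormFamily ℂ A κ} {e : ℕ → A}

theorem exists_mul_eq_one_of_hasExpansion (hp : WithSeminorms p)
    (horth : ∀ i j, e i * e j = if i = j then e i else 0) (hone : HasExpansion 1 e 1)
    {u : ℕ → ℝ} (hu : Monotone u) (htop : Tendsto u atTop atTop) {l : ℂ} (hl : ∀ n, ‖l‖ < u n)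
    {z : A} (hz : HasExpansion (fun n => (u n : ℂ) - l) e z) : ∃ w, z * w = 1 := by
  have hle : ∀ n, u n - ‖l‖ ≤ ‖(u n : ℂ) - l‖ := fun n => sub_norm_le_norm_ofReal_sub (u n) l
  have hne : ∀ n, (u n : ℂ) - l ≠ 0 := fun n =>
    norm_pos_iff.1 ((sub_pos.2 (hl n)).trans_le (hle n))
  have hc0 : Tendsto (fun n => ((u n : ℂ) - l)⁻¹) atTop (𝓝 0) := by
    refine squeeze_zero_norm' (Eventually.of_forall fun n => ?_)
      (tendsto_inv_atTop_zero.comp (tendsto_atTop_add_const_right _ (-‖l‖) htop))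
    rw [norm_inv]
    exact inv_anti₀ (sub_pos.2 (hl n)) (hle n)
  obtain ⟨w, hw⟩ := exists_hasExpansion_of_tendsto_zero_of_summable_norm_sub hp hone hc0
    (hu.summable_norm_inv_ofReal_sub_succ_sub_inv hl)
  have hcoef : ((fun n => (u n : ℂ) - l) * fun n => ((u n : ℂ) - l)⁻¹) = 1 :=
    funext fun n => mul_inv_cancel₀ (hne n)
  exact ⟨w, (hz.mul horth hw).unique (hcoef ▸ hone)⟩

theorem AlgHom.exists_apply_basis_ne_zero (φ : A →ₐ[ℂ] ℂ) (hp : WithSeminorms p)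
    (horth : ∀ i j, e i * e j = if i = j then e i else 0) (hone : HasExpansion 1 e 1)
    {t : ℕ → ℝ} (ht : Monotone t) (htop : Tendsto t atTop atTop) {x : A}
    (hx : HasExpansion (fun n => (t n : ℂ)) e x) : ∃ n, φ (e n) ≠ 0 := by
  by_contra! hφe
  set l := φ x
  obtain ⟨N, hN⟩ := (htop.eventually_ge_atTop (‖l‖ + 1)).exists_forall_of_atTop
  set u : ℕ → ℝ := fun n => max (t n) (‖l‖ + 1)
  set F := ∑ n ∈ range N, ((u n - t n : ℝ) : ℂ) • e n
  have hF : HasExpansion (fun n => ((u n - t n : ℝ) : ℂ)) e F :=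
    hasExpansion_of_forall_ge_eq_zero e fun n hn => by simp [u, max_eq_left (hN n hn)]
  have hz : HasExpansion (fun n => (u n : ℂ) - l) e (x - l • 1 + F) := by
    have hcoef : (fun n => (u n : ℂ) - l) =
        (fun n => (t n : ℂ)) - l • 1 + fun n => ((u n - t n : ℝ) : ℂ) := by
      funext n
      simp
    exact hcoef ▸ (hx.sub (hone.const_smul l)).add hF
  obtain ⟨w, hw⟩ := exists_mul_eq_one_of_hasExpansion hp horth hone
    (ht.max monotone_const) (tendsto_atTop_mono (fun n => le_max_left _ _) htop)
    (fun n => (lt_add_one _).trans_le (le_max_right _ _)) hz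
  have hφz : φ (x - l • 1 + F) = 0 := by simp [F, hφe, l]
  simpa [hφz] using congrArg φ hw

end Inverse

theorem stmt7_general {A : Type*} [Ring A] [Algebra ℂ A] [UniformSpace A] [T2Space A]
    [IsUniformAddGroup A] [ContinuousSMul ℂ A] [CompleteSpace A]
    (p : ℕ → Seminorm ℂ A) (hp : WithSeminorms p)
    (hsub : ∀ i x y, p i (x * y) ≤ p (i + 1) x * p (i + 1) y)
    (e : ℕ → A) (coef : A → ℕ → ℂ)
    (horth : ∀ i j, e i * e j = if i = j then e i else 0)
    (hbasis : ∀ x, HasExpansion (coef x) e x)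
    (huniq : ∀ x a, HasExpansion a e x → a = coef x)
    (t : ℕ → ℝ) (ht : Monotone t) (htop : Tendsto t atTop atTop)
    (x : A) (hx : HasExpansion (fun n => (t n : ℂ)) e x) :
    ∀ f : A → ℂ, IsLinearMap ℂ f → (∀ y z, f (y * z) = f y * f z) → Continuous f := by
  intro f hlin hmul
  have : ContinuousMul A := hp.continuousMul fun i => ⟨i + 1, hsub i⟩
  have hone : HasExpansion 1 e 1 := hasExpansion_one horth (hbasis 1) (basis_ne_zero huniq)
  by_cases hf1 : f 1 = 0
  · have hf : f = 0 := funext fun y => by simpa [hf1] using hmul y 1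
    exact hf ▸ continuous_const
  let φ : A →ₐ[ℂ] ℂ := .ofLinearMap (IsLinearMap.mk' f hlin)
    ((mul_eq_left₀ hf1).1 (by simpa using (hmul 1 1).symm)) hmul
  obtain ⟨n, hn⟩ := φ.exists_apply_basis_ne_zero hp horth hone ht htop hx
  exact φ.continuous_of_forall_mul_eq_smul hn fun y => ⟨_, (hbasis y).mul_basis horth n⟩

/-- If some x = Σ tₙ eₙ has real coefficients increasing to ∞, then every multiplicative
linear functional on A is continuous. -/
theorem stmt7 {A : Type*} [Ring A] [Algebra ℂ A] [UniformSpace A] [T2Space A]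
    [IsUniformAddGroup A] [ContinuousSMul ℂ A] [CompleteSpace A]
    (p : ℕ → Seminorm ℂ A) (hp : WithSeminorms p)
    (hmono : ∀ i x, p i x ≤ p (i + 1) x)
    (hsub : ∀ i x y, p i (x * y) ≤ p (i + 1) x * p (i + 1) y)
    (e : ℕ → A) (coef : A → ℕ → ℂ)
    (horth : ∀ i j, e i * e j = if i = j then e i else 0)
    (hbasis : ∀ x, HasExpansion (coef x) e x)
    (huniq : ∀ x a, HasExpansion a e x → a = coef x)
    (t : ℕ → ℝ) (ht : Monotone t) (htop : Tendsto t atTop atTop)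
    (x : A) (hx : HasExpansion (fun n => (t n : ℂ)) e x) :
    ∀ f : A → ℂ, IsLinearMap ℂ f → (∀ y z, f (y * z) = f y * f z) → Continuous f :=
  stmt7_general p hp hsub e coef horth hbasis huniq t ht htop x hx
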